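/- arXiv:2304.02486 — 2 statements merged into one kernel-verified Lean document; each statement's English description precedes it below -/
import Mathlib

section
/- Let f be holomorphic in a neighborhood of the closed annulus {z : r₁ ≤ |z| ≤ r₂} with 0 < r₁ < r₂, not identically zero. Then the principal value contour integrals of f'/f over the circles |z| = r₂ and |z| = r₁ satisfy: (1/2πi)∮_{|z|=r₂} f'(z)/f(z) dz − (1/2πi)∮_{|z|=r₁} f'(z)/f(z) dz = N_open + (1/2)·N_boundary, where N_open is the number of zeros of f (with multiplicity) with r₁ < |z| < r₂ and N_boundary is the number of zeros (with multiplicity) on the two boundary circles. -/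
/-!
On the circle `|z| = r`, away from the zeros lying on it, `f` with those zeros divided out
equals `g · ∏ (z - a)` over the zeros `a` off the circle, so its logarithmic derivative is
`g'/g + ∑ 1/(z - a)`. Each term `1/(z - a)` integrates to `2πi` or `0` according as `a` is inside
or outside the circle, and the `g'/g` integrals over the two boundary circles agree by Cauchy's
theorem on the annulus. What survives in the difference are the zeros strictly inside the
annulus and those on the inner circle, besides the half counts built into the principal value.
-/

open Real MeasureTheory
open scoped Classical

/-- The principal value of `(1/2πi)∮_{|z|=r} f'(z)/f(z) dz`, for a function `f` whose
zeros (with multiplicity) are listed in the multiset `Z`:  it equals the ordinary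
contour integral of `g'/g`, where `g` is `f` with the zeros on the circle `|z| = r`
divided out, plus one half of the number of zeros on that circle. -/
noncomputable def pvLogDerivIntegral (f : ℂ → ℂ) (Z : Multiset ℂ) (r : ℝ) : ℂ :=
  (2 * Real.pi * Complex.I)⁻¹ •
      (∮ z in C(0, r),
        deriv (fun w => f w /
          ((Z.filter (fun z0 => ‖z0‖ = r)).map (fun z0 => w - z0)).prod) z /
        (f z / ((Z.filter (fun z0 => ‖z0‖ = r)).map (fun z0 => z - z0)).prod))
    + ((Z.filter (fun z0 => ‖z0‖ = r)).card : ℂ) / 2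

open Complex Metric Filter Topology

theorem Multiset.card_filter_or_of_disjoint {α : Type*} {s : Multiset α} {p q : α → Prop}
    [DecidablePred p] [DecidablePred q] (h : ∀ a ∈ s, ¬(p a ∧ q a)) :
    (s.filter fun a => p a ∨ q a).card = (s.filter p).card + (s.filter q).card := by
  rw [← Multiset.card_add, Multiset.filter_add_filter, Multiset.filter_eq_nil.2 h, add_zero]

theorem differentiable_multiset_prod_sub (S : Multiset ℂ) :
    Differentiable ℂ fun w : ℂ => (S.map fun a => w - a).prod := by
  induction S using Multiset.induction with
  | empty => simp
  | cons a S ih =>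
    simp only [Multiset.map_cons, Multiset.prod_cons]
    exact (differentiable_id.sub_const a).mul ih

theorem multiset_prod_sub_ne_zero {S : Multiset ℂ} {z : ℂ} (hz : z ∉ S) :
    (S.map fun a => z - a).prod ≠ 0 := by
  simpa [Multiset.prod_eq_zero_iff, sub_eq_zero] using hz

theorem logDeriv_mul_multiset_prod_sub {h : ℂ → ℂ} {z : ℂ} (hh : DifferentiableAt ℂ h z)
    (hz : h z ≠ 0) {S : Multiset ℂ} (hzS : z ∉ S) :
    logDeriv (fun w => h w * (S.map fun a => w - a).prod) z
      = logDeriv h z + (S.map fun a => (z - a)⁻¹).sum := by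
  induction S using Multiset.induction with
  | empty => simp
  | cons a S ih =>
    rw [Multiset.mem_cons, not_or] at hzS
    have hfun : (fun w => h w * ((a ::ₘ S).map fun b => w - b).prod)
        = fun w => (w - a) * (h w * (S.map fun b => w - b).prod) := by
      funext w
      simp only [Multiset.map_cons, Multiset.prod_cons]
      ring
    rw [hfun, logDeriv_mul (f := fun w => w - a) (g := fun w => h w * (S.map fun b => w - b).prod) z
      (sub_ne_zero.2 hzS.1) (mul_ne_zero hz (multiset_prod_sub_ne_zero hzS.2)) (by fun_prop)
      (hh.mul (differentiable_multiset_prod_sub S z)), ih hzS.2]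
    simp [logDeriv_apply, add_left_comm]

theorem circleIntegral_sub_inv_of_notMem_closedBall {c a : ℂ} {R : ℝ} (hR : 0 ≤ R)
    (ha : a ∉ closedBall c R) : (∮ z in C(c, R), (z - a)⁻¹) = 0 := by
  have hd : DifferentiableOn ℂ (fun z => (z - a)⁻¹) (closedBall c R) := fun z hz =>
    ((differentiableAt_id.sub_const a).inv (sub_ne_zero.2 (ne_of_mem_of_not_mem hz ha))).differentiableWithinAt
  exact (hd.diffContOnCl_ball subset_rfl).circleIntegral_eq_zero hR

theorem circleIntegrable_multiset_sum_sub_inv {c : ℂ} {R : ℝ} (hR : 0 ≤ R) {S : Multiset ℂ}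
    (hS : ∀ a ∈ S, a ∉ sphere c R) :
    CircleIntegrable (fun z => (S.map fun a => (z - a)⁻¹).sum) c R :=
  ContinuousOn.circleIntegrable hR <| continuousOn_multiset_sum _ fun a ha =>
    (continuousOn_id.sub continuousOn_const).inv₀ fun _ hz =>
      sub_ne_zero.2 (ne_of_mem_of_not_mem hz (hS a ha))

theorem circleIntegral_multiset_sum_sub_inv {c : ℂ} {R : ℝ} (hR : 0 ≤ R) {S : Multiset ℂ}
    (hS : ∀ a ∈ S, a ∉ sphere c R) :
    (∮ z in C(c, R), (S.map fun a => (z - a)⁻¹).sum)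
      = 2 * π * I * (S.filter (· ∈ ball c R)).card := by
  induction S using Multiset.induction with
  | empty => simp [circleIntegral]
  | cons a S ih =>
    rw [Multiset.forall_mem_cons] at hS
    simp only [Multiset.map_cons, Multiset.sum_cons]
    rw [circleIntegral.integral_add
      (circleIntegrable_sub_inv_iff.2 (Or.inr (by rw [abs_of_nonneg hR]; exact hS.1)))
      (circleIntegrable_multiset_sum_sub_inv hR hS.2), ih hS.2, Multiset.filter_cons]
    by_cases ha : a ∈ ball c R
    · simp only [ha, if_true, circleIntegral.integral_sub_inv_of_mem_ball ha, Multiset.card_add,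
        Multiset.card_singleton]
      push_cast
      ring
    · have ha' : a ∉ closedBall c R := by
        rw [← ball_union_sphere]
        exact fun h => h.elim ha hS.1
      simp [ha, circleIntegral_sub_inv_of_notMem_closedBall hR ha']

theorem differentiableOn_logDeriv {U : Set ℂ} (hU : IsOpen U) {g : ℂ → ℂ}
    (hg : DifferentiableOn ℂ g U) (hgne : ∀ z ∈ U, g z ≠ 0) :
    DifferentiableOn ℂ (logDeriv g) U :=
  (hg.analyticOnNhd hU).deriv.differentiableOn.div hg hgne

theorem circleIntegral_logDeriv_eq_of_annulus {c : ℂ} {r R : ℝ} (hr : 0 < r) (hrR : r ≤ R)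
    {U : Set ℂ} (hU : IsOpen U) (hann : closedBall c R \ ball c r ⊆ U) {g : ℂ → ℂ}
    (hg : DifferentiableOn ℂ g U) (hgne : ∀ z ∈ U, g z ≠ 0) :
    (∮ z in C(c, R), logDeriv g z) = ∮ z in C(c, r), logDeriv g z := by
  have hd := differentiableOn_logDeriv hU hg hgne
  refine circleIntegral_eq_of_differentiable_on_annulus_off_countable hr hrR Set.countable_empty
    (hd.continuousOn.mono hann) fun z hz => hd.differentiableAt (hU.mem_nhds (hann ?_))
  exact ⟨ball_subset_closedBall hz.1.1, fun h => hz.1.2 (ball_subset_closedBall h)⟩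

theorem div_prod_filter_eventuallyEq {U : Set ℂ} (hU : IsOpen U) {f g : ℂ → ℂ} {Z : Multiset ℂ}
    (hfact : ∀ z ∈ U, f z = g z * (Z.map fun a => z - a).prod) (p : ℂ → Prop) [DecidablePred p]
    {z : ℂ} (hzU : z ∈ U) (hzZ : z ∉ Z.filter p) :
    (fun w => f w / ((Z.filter p).map fun a => w - a).prod) =ᶠ[𝓝 z]
      fun w => g w * ((Z.filter fun a => ¬p a).map fun a => w - a).prod := by
  have hP : ∀ᶠ w in 𝓝 z, ((Z.filter p).map fun a => w - a).prod ≠ 0 :=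
    (differentiable_multiset_prod_sub _).continuous.continuousAt.eventually_ne
      (multiset_prod_sub_ne_zero hzZ)
  filter_upwards [hU.mem_nhds hzU, hP] with w hwU hwP
  have hsplit : (Z.map fun a => w - a).prod = ((Z.filter p).map fun a => w - a).prod
      * ((Z.filter fun a => ¬p a).map fun a => w - a).prod := by
    rw [← Multiset.prod_add, ← Multiset.map_add, Multiset.filter_add_not]
  rw [hfact w hwU, hsplit]
  field_simp

theorem pvLogDerivIntegral_eq {r : ℝ} (hr : 0 < r) {U : Set ℂ} (hU : IsOpen U)
    (hsU : sphere (0 : ℂ) r ⊆ U) {f g : ℂ → ℂ} {Z : Multiset ℂ} (hg : DifferentiableOn ℂ g U)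
    (hgne : ∀ z ∈ U, g z ≠ 0) (hfact : ∀ z ∈ U, f z = g z * (Z.map fun a => z - a).prod) :
    pvLogDerivIntegral f Z r = (2 * π * I)⁻¹ * (∮ z in C(0, r), logDeriv g z)
      + (Z.filter (‖·‖ < r)).card + (Z.filter (‖·‖ = r)).card / 2 := by
  set Zo := Z.filter fun a => ¬‖a‖ = r
  have hZo : ∀ a ∈ Zo, a ∉ sphere (0 : ℂ) r := fun a ha => by
    simpa using (Multiset.mem_filter.1 ha).2
  have hpv : (∮ z in C(0, r), logDeriv (fun w => f w /
        ((Z.filter (‖·‖ = r)).map fun a => w - a).prod) z)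
      = ∮ z in C(0, r), logDeriv (fun w => g w * (Zo.map fun a => w - a).prod) z := by
    -- at a zero on the circle the quotient takes the junk value `f z / 0 = 0`, so the two
    -- integrands agree only off these finitely many points
    refine circleIntegral.circleIntegral_congr_codiscreteWithin ?_ hr.ne'
    filter_upwards [self_mem_codiscreteWithin _,
      compl_finite_mem_codiscreteWithin (Z.filter (‖·‖ = r)).finite_toSet] with z hz hzZ
    rw [abs_of_pos hr] at hz
    exact (logDeriv_congr_nhds (div_prod_filter_eventuallyEq hU hfact _ (hsU hz) hzZ)).eq_of_nhds
  have hlog : Set.EqOn (logDeriv fun w => g w * (Zo.map fun a => w - a).prod)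
      (fun z => logDeriv g z + (Zo.map fun a => (z - a)⁻¹).sum) (sphere 0 r) := fun z hz =>
    logDeriv_mul_multiset_prod_sub (hg.differentiableAt (hU.mem_nhds (hsU hz)))
      (hgne z (hsU hz)) fun h => hZo z h hz
  have hint : CircleIntegrable (logDeriv g) 0 r :=
    ((differentiableOn_logDeriv hU hg hgne).continuousOn.mono hsU).circleIntegrable hr.le
  have hcount : (Zo.filter (· ∈ ball (0 : ℂ) r)).card = (Z.filter (‖·‖ < r)).card := by
    rw [Multiset.filter_filter]
    congr 1
    refine Multiset.filter_congr fun a _ => ?_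
    simpa using fun h => h.ne
  simp only [pvLogDerivIntegral, ← logDeriv_apply]
  rw [hpv, circleIntegral.integral_congr hr.le hlog, circleIntegral.integral_add hint
    (circleIntegrable_multiset_sum_sub_inv hr.le hZo), circleIntegral_multiset_sum_sub_inv hr.le hZo,
    hcount, smul_eq_mul]
  field_simp

theorem card_filter_norm_lt_of_mem_annulus {Z : Multiset ℂ} {r₁ r₂ : ℝ} (h : r₁ < r₂)
    (hZ : ∀ z ∈ Z, r₁ ≤ ‖z‖ ∧ ‖z‖ ≤ r₂) :
    (Z.filter (‖·‖ < r₂)).card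
      = (Z.filter fun z => r₁ < ‖z‖ ∧ ‖z‖ < r₂).card + (Z.filter (‖·‖ = r₁)).card := by
  rw [← Multiset.card_filter_or_of_disjoint fun z _ hz => hz.1.1.ne' hz.2]
  congr 1
  refine Multiset.filter_congr fun z hz => ?_
  rcases (hZ z hz).1.eq_or_lt with heq | hlt
  · simp [← heq, h]
  · simp [hlt, hlt.ne']

theorem pv_argument_principle_annulus_general (r₁ r₂ : ℝ) (hr₁ : 0 < r₁) (hr₁₂ : r₁ < r₂)
    (U : Set ℂ) (hU : IsOpen U)
    (hUann : {z : ℂ | r₁ ≤ ‖z‖ ∧ ‖z‖ ≤ r₂} ⊆ U)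
    (f g : ℂ → ℂ) (Z : Multiset ℂ)
    (hg : DifferentiableOn ℂ g U)
    (hgne : ∀ z ∈ U, g z ≠ 0)
    (hZmem : ∀ z ∈ Z, r₁ ≤ ‖z‖ ∧ ‖z‖ ≤ r₂)
    (hfact : ∀ z ∈ U, f z = g z * (Z.map (fun z0 => z - z0)).prod) :
    pvLogDerivIntegral f Z r₂ - pvLogDerivIntegral f Z r₁
      = ((Z.filter (fun z0 => r₁ < ‖z0‖ ∧ ‖z0‖ < r₂)).card : ℂ)
        + ((Z.filter (fun z0 => ‖z0‖ = r₁ ∨ ‖z0‖ = r₂)).card : ℂ) / 2 := by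
  have hsphere {r : ℝ} (h₁ : r₁ ≤ r) (h₂ : r ≤ r₂) : sphere (0 : ℂ) r ⊆ U := fun z hz =>
    hUann (by rw [Set.mem_ofPred_eq, mem_sphere_zero_iff_norm.1 hz]; exact ⟨h₁, h₂⟩)
  have hann : closedBall (0 : ℂ) r₂ \ ball 0 r₁ ⊆ U := fun z hz =>
    hUann ⟨not_lt.1 (by simpa using hz.2), by simpa using hz.1⟩
  have hinner : (Z.filter (‖·‖ < r₁)).card = 0 := by
    simpa [Multiset.filter_eq_nil] using fun z hz => (hZmem z hz).1
  rw [pvLogDerivIntegral_eq (hr₁.trans hr₁₂) hU (hsphere hr₁₂.le le_rfl) hg hgne hfact,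
    pvLogDerivIntegral_eq hr₁ hU (hsphere le_rfl hr₁₂.le) hg hgne hfact,
    circleIntegral_logDeriv_eq_of_annulus hr₁ hr₁₂.le hU hann hg hgne,
    card_filter_norm_lt_of_mem_annulus hr₁₂ hZmem, hinner,
    Multiset.card_filter_or_of_disjoint fun z _ hz => hr₁₂.ne (hz.1.symm.trans hz.2)]
  push_cast
  ring

/-- **Principal value argument principle on the annulus.**  Let `0 < r₁ < r₂` and let
`f` be holomorphic on an open neighborhood `U` of the closed annulus, not identically
zero: `f = g · ∏ᵢ(· - zᵢ)` with `g` holomorphic and nonvanishing on `U` and `Z` the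
multiset of zeros of `f` in the closed annulus.  Then the difference of the principal
value integrals of `(1/2πi) f'/f` over `|z| = r₂` and `|z| = r₁` equals the number of
zeros with `r₁ < |z| < r₂` plus half the number of zeros on the two boundary circles. -/
theorem pv_argument_principle_annulus (r₁ r₂ : ℝ) (hr₁ : 0 < r₁) (hr₁₂ : r₁ < r₂)
    (U : Set ℂ) (hU : IsOpen U)
    (hUann : {z : ℂ | r₁ ≤ ‖z‖ ∧ ‖z‖ ≤ r₂} ⊆ U)
    (f g : ℂ → ℂ) (Z : Multiset ℂ)
    (hf : DifferentiableOn ℂ f U) (hg : DifferentiableOn ℂ g U)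
    (hgne : ∀ z ∈ U, g z ≠ 0)
    (hZmem : ∀ z ∈ Z, r₁ ≤ ‖z‖ ∧ ‖z‖ ≤ r₂)
    (hfact : ∀ z ∈ U, f z = g z * (Z.map (fun z0 => z - z0)).prod) :
    pvLogDerivIntegral f Z r₂ - pvLogDerivIntegral f Z r₁
      = ((Z.filter (fun z0 => r₁ < ‖z0‖ ∧ ‖z0‖ < r₂)).card : ℂ)
        + ((Z.filter (fun z0 => ‖z0‖ = r₁ ∨ ‖z0‖ = r₂)).card : ℂ) / 2 :=
  pv_argument_principle_annulus_general r₁ r₂ hr₁ hr₁₂ U hU hUann f g Z hg hgne hZmem hfact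
end

section
/- Let M ∈ SL(2,ℂ), let e₁, e₂ be the standard basis of ℂ², and let u⁺, u⁻, v⁺, v⁻ be unit vectors with M u⁺ = ‖M‖ v⁺, M u⁻ = ‖M‖^{−1} v⁻ and |u⁺ ∧ u⁻| = |v⁺ ∧ v⁻| = 1. Then |M e₁ ∧ e₂| ≥ ‖M‖·|u⁻ ∧ e₁|·|v⁺ ∧ e₂| − ‖M‖^{−1}·|u⁺ ∧ e₁|·|v⁻ ∧ e₂|. -/
/-! Since `u⁺ ∧ u⁻` is a unit complex number, Cramer's rule writes
`e₁ = ((e₁ ∧ u⁻) u⁺ + (u⁺ ∧ e₁) u⁻) / (u⁺ ∧ u⁻)` with coefficients of modulus `|u⁻ ∧ e₁|` and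
`|u⁺ ∧ e₁|`. Applying `M` gives `M e₁` as a combination of `‖M‖ v⁺` and `‖M‖⁻¹ v⁻`; wedging with
`e₂`, which is linear in the first slot, and the reverse triangle inequality give the bound. -/

/-- The wedge product `a ∧ b` of two vectors in `ℂ²`: the determinant of the `2×2`
matrix with columns `a` and `b`. -/
noncomputable def wedge (a b : EuclideanSpace ℂ (Fin 2)) : ℂ :=
  a 0 * b 1 - a 1 * b 0

open EuclideanSpace

section Wedge

variable (a b c x : EuclideanSpace ℂ (Fin 2))

theorem wedge_comm : wedge a b = -wedge b a := by
  simp only [wedge]; ring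

theorem norm_wedge_comm : ‖wedge a b‖ = ‖wedge b a‖ := by
  rw [wedge_comm, norm_neg]

theorem wedge_add_left : wedge (a + b) c = wedge a c + wedge b c := by
  simp only [wedge, PiLp.add_apply]; ring

theorem wedge_smul_left (r : ℂ) : wedge (r • a) c = r * wedge a c := by
  simp only [wedge, PiLp.smul_apply, smul_eq_mul]; ring

theorem eq_wedge_div_smul_add_wedge_div_smul (h : wedge a b ≠ 0) :
    x = (wedge x b / wedge a b) • a + (wedge a x / wedge a b) • b := by
  have h' : b 1 * a 0 - b 0 * a 1 ≠ 0 := fun h₀ ↦ h (by rw [wedge]; linear_combination h₀)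
  ext i
  fin_cases i <;>
  · simp only [wedge, PiLp.add_apply, PiLp.smul_apply, smul_eq_mul, Fin.zero_eta, Fin.mk_one]
    field_simp
    ring

theorem wedge_map_left_eq (f : EuclideanSpace ℂ (Fin 2) →L[ℂ] EuclideanSpace ℂ (Fin 2))
    (h : wedge a b ≠ 0) :
    wedge (f x) c = wedge x b / wedge a b * wedge (f a) c + wedge a x / wedge a b * wedge (f b) c := by
  conv_lhs => rw [eq_wedge_div_smul_add_wedge_div_smul a b x h]
  rw [map_add, map_smul, map_smul, wedge_add_left, wedge_smul_left, wedge_smul_left]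

end Wedge

theorem entry_lower_bound_general
    (M : EuclideanSpace ℂ (Fin 2) →L[ℂ] EuclideanSpace ℂ (Fin 2))
    (up um vp vm : EuclideanSpace ℂ (Fin 2))
    (hMup : M up = ‖M‖ • vp) (hMum : M um = ‖M‖⁻¹ • vm)
    (hu : ‖wedge up um‖ = 1) :
    ‖M‖ * ‖wedge um (EuclideanSpace.single 0 1)‖
          * ‖wedge vp (EuclideanSpace.single 1 1)‖
        - ‖M‖⁻¹ * ‖wedge up (EuclideanSpace.single 0 1)‖
          * ‖wedge vm (EuclideanSpace.single 1 1)‖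
      ≤ ‖wedge (M (EuclideanSpace.single 0 1)) (EuclideanSpace.single 1 1)‖ := by
  set e₁ : EuclideanSpace ℂ (Fin 2) := single 0 1
  set e₂ : EuclideanSpace ℂ (Fin 2) := single 1 1
  set w := wedge up um
  have hw : w ≠ 0 := norm_ne_zero_iff.mp (hu ▸ one_ne_zero)
  have hMe₁ : wedge (M e₁) e₂ = wedge e₁ um / w * (‖M‖ * wedge vp e₂)
      + wedge up e₁ / w * (‖M‖⁻¹ * wedge vm e₂) := by
    rw [wedge_map_left_eq up um e₂ e₁ M hw, hMup, hMum, ← Complex.coe_smul, ← Complex.coe_smul,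
      wedge_smul_left, wedge_smul_left]
  have hnorm : ∀ z y : ℂ, ∀ r : ℝ, 0 ≤ r → ‖z / w * (r * y)‖ = r * ‖z‖ * ‖y‖ := by
    intro z y r hr
    rw [norm_mul, norm_div, hu, div_one, norm_mul, Complex.norm_of_nonneg hr]; ring
  calc ‖M‖ * ‖wedge um e₁‖ * ‖wedge vp e₂‖ - ‖M‖⁻¹ * ‖wedge up e₁‖ * ‖wedge vm e₂‖
      = ‖wedge e₁ um / w * (‖M‖ * wedge vp e₂)‖
          - ‖-(wedge up e₁ / w * (‖M‖⁻¹ * wedge vm e₂))‖ := by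
        rw [norm_neg, hnorm _ _ _ (norm_nonneg M), hnorm _ _ _ (inv_nonneg.mpr (norm_nonneg M)),
          norm_wedge_comm e₁]
    _ ≤ ‖wedge (M e₁) e₂‖ := by
        rw [hMe₁, ← sub_neg_eq_add]; exact norm_sub_norm_le _ _

/-- **Entry lower bound from singular directions.**  For `M ∈ SL(2,ℂ)` with singular
directions `u⁺, u⁻, v⁺, v⁻` (unit vectors with `M u⁺ = ‖M‖ v⁺`, `M u⁻ = ‖M‖⁻¹ v⁻`,
`|u⁺ ∧ u⁻| = |v⁺ ∧ v⁻| = 1`), and standard basis vectors `e₁, e₂`,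
`|M e₁ ∧ e₂| ≥ ‖M‖·|u⁻ ∧ e₁|·|v⁺ ∧ e₂| − ‖M‖⁻¹·|u⁺ ∧ e₁|·|v⁻ ∧ e₂|`. -/
theorem entry_lower_bound
    (M : EuclideanSpace ℂ (Fin 2) →L[ℂ] EuclideanSpace ℂ (Fin 2))
    (hdet : LinearMap.det (M : EuclideanSpace ℂ (Fin 2) →ₗ[ℂ] EuclideanSpace ℂ (Fin 2)) = 1)
    (up um vp vm : EuclideanSpace ℂ (Fin 2))
    (hup : ‖up‖ = 1) (hum : ‖um‖ = 1) (hvp : ‖vp‖ = 1) (hvm : ‖vm‖ = 1)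
    (hMup : M up = ‖M‖ • vp) (hMum : M um = ‖M‖⁻¹ • vm)
    (hu : ‖wedge up um‖ = 1) (hv : ‖wedge vp vm‖ = 1) :
    ‖M‖ * ‖wedge um (EuclideanSpace.single 0 1)‖
          * ‖wedge vp (EuclideanSpace.single 1 1)‖
        - ‖M‖⁻¹ * ‖wedge up (EuclideanSpace.single 0 1)‖
          * ‖wedge vm (EuclideanSpace.single 1 1)‖
      ≤ ‖wedge (M (EuclideanSpace.single 0 1)) (EuclideanSpace.single 1 1)‖ :=
  entry_lower_bound_general M up um vp vm hMup hMum hu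
end
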